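/- Let a, b ≥ 2 be natural numbers and suppose a^m = b^n for some positive integers m, n. Then there exist a natural number c ≥ 2 and positive integers r, s such that a = c^r and b = c^s. -/

import Mathlib

/-!
Dividing `m` and `n` by their gcd, `a ^ m' = b ^ n'` with `m'`, `n'` coprime. In the group
`ℚ≥0ˣ` a Bézout combination `a ^ u * b ^ v` of `a` and `b` is then a common root, `a = c ^ n'` and
`b = c ^ m'`; and `c` is a natural number because its power `a` is.
-/

namespace Nat

theorem exists_eq_pow_of_pow_eq_pow_of_coprime {a b m n : ℕ} (hmn : m.Coprime n) (hn : n ≠ 0)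
    (h : a ^ m = b ^ n) : ∃ c : ℕ, a = c ^ n ∧ b = c ^ m := by
  have hq : (a : ℚ≥0) ^ m = (b : ℚ≥0) ^ n := by exact_mod_cast h
  obtain ⟨q, hqa, hqb⟩ := (pow_eq_pow_iff_of_coprime hmn).mp hq
  have hden : q.den = 1 := by
    have hpow : q.den ^ n = 1 := by simpa using (congrArg NNRat.den hqa).symm
    exact (pow_eq_one_iff.mp hpow).resolve_right hn
  have hq_nat : q = (q.num : ℚ≥0) := NNRat.ext_num_den (by simp) (by simp [hden])
  rw [hq_nat] at hqa hqb
  exact ⟨q.num, by exact_mod_cast hqa, by exact_mod_cast hqb⟩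

theorem exists_eq_pow_div_gcd_of_pow_eq_pow {a b m n : ℕ} (hn : 0 < n) (h : a ^ m = b ^ n) :
    ∃ c : ℕ, a = c ^ (n / m.gcd n) ∧ b = c ^ (m / m.gcd n) := by
  set g := m.gcd n
  have hg : 0 < g := gcd_pos_of_pos_right m hn
  have hcop : (m / g).Coprime (n / g) := coprime_div_gcd_div_gcd hg
  have hreduced : a ^ (m / g) = b ^ (n / g) := by
    refine pow_left_injective hg.ne' ?_
    dsimp only
    rw [← pow_mul, ← pow_mul, Nat.div_mul_cancel (gcd_dvd_left m n),
      Nat.div_mul_cancel (gcd_dvd_right m n), h]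
  exact exists_eq_pow_of_pow_eq_pow_of_coprime hcop (div_gcd_pos_of_pos_right m hn).ne'
    hreduced

theorem two_le_of_two_le_pow {c r : ℕ} (hr : r ≠ 0) (h : 2 ≤ c ^ r) : 2 ≤ c := by
  by_contra! hc
  interval_cases c <;> simp [hr] at h

end Nat

theorem mult_dependent_common_base_general (a b : ℕ) (ha : 2 ≤ a)
    (m n : ℕ) (hm : 0 < m) (hn : 0 < n) (h : a ^ m = b ^ n) :
    ∃ c r s : ℕ, 2 ≤ c ∧ 0 < r ∧ 0 < s ∧ a = c ^ r ∧ b = c ^ s := by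
  obtain ⟨c, hac, hbc⟩ := Nat.exists_eq_pow_div_gcd_of_pow_eq_pow hn h
  have hr := Nat.div_gcd_pos_of_pos_right m hn
  have hs := Nat.div_gcd_pos_of_pos_left n hm
  exact ⟨c, _, _, Nat.two_le_of_two_le_pow hr.ne' (hac ▸ ha), hr, hs, hac, hbc⟩

theorem mult_dependent_common_base (a b : ℕ) (ha : 2 ≤ a) (hb : 2 ≤ b)
    (m n : ℕ) (hm : 0 < m) (hn : 0 < n) (h : a ^ m = b ^ n) :
    ∃ c r s : ℕ, 2 ≤ c ∧ 0 < r ∧ 0 < s ∧ a = c ^ r ∧ b = c ^ s :=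
  mult_dependent_common_base_general a b ha m n hm hn h
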